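/- arXiv:1808.01003 — 3 statements merged into one kernel-verified Lean document; each statement's English description precedes it below -/
import Mathlib

section
/- Let (G, H, ∂, α) be a crossed module of topological groups where G is connected and abelian and the kernel of ∂ is discrete. Then the action α of G on H is trivial, and consequently H is abelian. -/
/-!
For fixed `h`, the map `g ↦ α g h` is continuous on the connected group `G`, and since `G` is
abelian, `d (α g h) = d h`, so it takes values in the coset `(ker d) h`. A discrete coset
receives only constant continuous maps from a connected space, hence `α g h = α 1 h = h`.
The Peiffer identity then makes conjugation in `H` trivial.
-/

theorem eq_of_continuous_of_mul_inv_mem {X H : Type*} [TopologicalSpace X] [PreconnectedSpace X]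
    [Group H] [TopologicalSpace H] [ContinuousMul H] {K : Subgroup H} [DiscreteTopology K]
    {f : X → H} (hf : Continuous f) {c : H} (hK : ∀ x, f x * c⁻¹ ∈ K) (x y : X) :
    f x = f y := by
  let F : X → K := fun x => ⟨f x * c⁻¹, hK x⟩
  have hF : Continuous F := (hf.mul continuous_const).subtype_mk _
  have hFxy : F x = F y := PreconnectedSpace.constant inferInstance hF
  exact mul_right_cancel (congrArg Subtype.val hFxy)

theorem mul_inv_mem_ker_of_map_eq_conj {G H : Type*} [CommGroup G] [Group H] (d : H →* G)
    {α : G → H → H} (hequiv : ∀ g h, d (α g h) = g * d h * g⁻¹) (g : G) (h : H) :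
    α g h * h⁻¹ ∈ d.ker := by
  simp [MonoidHom.mem_ker, hequiv]

theorem mul_comm_of_peiffer_of_action_trivial {G H : Type*} [Group G] [Group H] (d : H →* G)
    (α : G →* MulAut H) (hpeiffer : ∀ h h' : H, α (d h) h' = h * h' * h⁻¹)
    (htriv : ∀ (g : G) (h : H), α g h = h) (h h' : H) : h * h' = h' * h := by
  have hconj := hpeiffer h h'
  rw [htriv] at hconj
  exact (eq_mul_inv_iff_mul_eq.mp hconj).symm

theorem crossedModule_connected_abelian_action_trivial_general
    {G H : Type*} [CommGroup G] [TopologicalSpace G] [ConnectedSpace G]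
    [Group H] [TopologicalSpace H] [IsTopologicalGroup H]
    (d : H →* G)
    (α : G →* MulAut H) (hα : Continuous fun p : G × H => α p.1 p.2)
    (hequiv : ∀ (g : G) (h : H), d (α g h) = g * d h * g⁻¹)
    (hpeiffer : ∀ (h h' : H), α (d h) h' = h * h' * h⁻¹)
    (hker : DiscreteTopology d.ker) :
    (∀ (g : G) (h : H), α g h = h) ∧ ∀ (h h' : H), h * h' = h' * h := by
  have htriv : ∀ (g : G) (h : H), α g h = h := by
    intro g h
    have hcoset (g' : G) : α g' h * h⁻¹ ∈ d.ker :=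
      mul_inv_mem_ker_of_map_eq_conj d (α := fun g h => α g h) hequiv g' h
    simpa using eq_of_continuous_of_mul_inv_mem (hα.comp (Continuous.prodMk_left h)) hcoset g 1
  exact ⟨htriv, mul_comm_of_peiffer_of_action_trivial d α hpeiffer htriv⟩

/-- Let `(G, H, d, α)` be a crossed module of topological groups, where
`G` is connected and abelian and the kernel of `d` is a discrete subgroup of `H`.
Then the action `α` of `G` on `H` is trivial, and consequently `H` is abelian. -/
theorem crossedModule_connected_abelian_action_trivial
    {G H : Type*} [CommGroup G] [TopologicalSpace G] [IsTopologicalGroup G] [ConnectedSpace G]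
    [Group H] [TopologicalSpace H] [IsTopologicalGroup H]
    (d : H →* G) (hd : Continuous d)
    (α : G →* MulAut H) (hα : Continuous fun p : G × H => α p.1 p.2)
    (hequiv : ∀ (g : G) (h : H), d (α g h) = g * d h * g⁻¹)
    (hpeiffer : ∀ (h h' : H), α (d h) h' = h * h' * h⁻¹)
    (hker : DiscreteTopology d.ker) :
    (∀ (g : G) (h : H), α g h = h) ∧ ∀ (h h' : H), h * h' = h' * h :=
  crossedModule_connected_abelian_action_trivial_general d α hα hequiv hpeiffer hker
end

section
/- Let g and g' be compact Lie algebras (finite-dimensional real Lie algebras admitting an invariant inner product), and let f : g → g' be a surjective Lie algebra homomorphism. If t is a maximal abelian Lie subalgebra of g, then f(t) is a maximal abelian Lie subalgebra of g'. -/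
/-!
The kernel of `f` is an ideal, and its orthogonal complement `J` for an invariant inner product
is a complementary ideal, so `f` maps `J` isomorphically onto `g'`. Let `t' ⊇ f(t)` be abelian
and lift `y' ∈ t'` to `y ∈ J`. For `u ∈ t` the bracket `⁅u, y⁆` lies in `J` and maps to
`⁅f u, y'⁆ = 0`, hence vanishes. A maximal abelian subalgebra contains everything commuting
with it, so `y ∈ t` and `y' ∈ f(t)`.
-/

/-- A finite-dimensional real Lie algebra is *compact* if it admits an ad-invariant
positive definite (symmetric) inner product. -/
def IsCompactLieAlgebra (g : Type*) [LieRing g] [LieAlgebra ℝ g] : Prop :=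
  ∃ B : g →ₗ[ℝ] g →ₗ[ℝ] ℝ,
    (∀ x y : g, B x y = B y x) ∧
    (∀ x : g, x ≠ 0 → 0 < B x x) ∧
    (∀ x y z : g, B ⁅x, y⁆ z + B y ⁅x, z⁆ = 0)

/-- A Lie subalgebra `t` of `g` is *maximal abelian* if it is abelian and is not properly
contained in any abelian Lie subalgebra of `g`. -/
def IsMaximalAbelianLieSubalgebra {g : Type*} [LieRing g] [LieAlgebra ℝ g]
    (t : LieSubalgebra ℝ g) : Prop :=
  IsLieAbelian t ∧ ∀ t' : LieSubalgebra ℝ g, IsLieAbelian t' → t ≤ t' → t' = t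

section General

variable {R L L' : Type*} [CommRing R] [LieRing L] [LieAlgebra R L] [LieRing L'] [LieAlgebra R L']

theorem LieSubalgebra.isLieAbelian_iff_forall_lie_eq_zero {K : LieSubalgebra R L} :
    IsLieAbelian K ↔ ∀ x ∈ K, ∀ y ∈ K, ⁅x, y⁆ = 0 := by
  have h := LieSubalgebra.isLieAbelian_lieSpan_iff (R := R) (s := (K : Set L))
  rwa [K.lieSpan_eq] at h

theorem LieSubalgebra.isLieAbelian_map (f : L →ₗ⁅R⁆ L') {K : LieSubalgebra R L}
    (hK : IsLieAbelian K) : IsLieAbelian (K.map f) := by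
  rw [← K.lieSpan_eq, LieSubalgebra.map_lieSpan, LieSubalgebra.isLieAbelian_lieSpan_iff]
  rintro _ ⟨x, hx, rfl⟩ _ ⟨y, hy, rfl⟩
  rw [← f.map_lie, isLieAbelian_iff_forall_lie_eq_zero.mp hK x hx y hy, map_zero]

namespace LieHom

variable (f : L →ₗ⁅R⁆ L') {J : LieIdeal R L}

theorem lie_eq_zero_of_map_lie_eq_zero (hJ : Disjoint f.ker J) {x y : L} (hy : y ∈ J)
    (h : ⁅f x, f y⁆ = 0) : ⁅x, y⁆ = 0 := by
  have hker : ⁅x, y⁆ ∈ f.ker := by rw [LieHom.mem_ker, f.map_lie, h]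
  exact Submodule.disjoint_def.mp (LieSubmodule.disjoint_toSubmodule.mpr hJ) _ hker
    (J.lie_mem hy)

theorem exists_mem_apply_eq_of_codisjoint (hf : Function.Surjective f) (hJ : Codisjoint f.ker J)
    (y' : L') : ∃ y ∈ J, f y = y' := by
  obtain ⟨x, rfl⟩ := hf y'
  have hx : x ∈ f.ker.toSubmodule ⊔ J.toSubmodule := by
    rw [(LieSubmodule.codisjoint_toSubmodule.mpr hJ).eq_top]
    trivial
  obtain ⟨a, ha, y, hy, rfl⟩ := Submodule.mem_sup.mp hx
  exact ⟨y, hy, by rw [map_add, f.mem_ker.mp ha, zero_add]⟩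

end LieHom

end General

section Real

variable {L L' : Type*} [LieRing L] [LieAlgebra ℝ L] [LieRing L'] [LieAlgebra ℝ L']

theorem IsCompactLieAlgebra.exists_isCompl [FiniteDimensional ℝ L] (hL : IsCompactLieAlgebra L)
    (I : LieIdeal ℝ L) : ∃ J : LieIdeal ℝ L, IsCompl I J := by
  obtain ⟨B, hsymm, hpos, hinv⟩ := hL
  let J : LieIdeal ℝ L :=
    { LinearMap.BilinForm.orthogonal B I.toSubmodule with
      lie_mem := fun {z y} hy a ha => by
        have hza : B ⁅z, a⁆ y = 0 := hy _ (I.lie_mem ha)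
        have hzay := hinv z a y
        change B a ⁅z, y⁆ = 0
        linarith }
  refine ⟨J, LieSubmodule.isCompl_toSubmodule.mp ?_⟩
  refine (LinearMap.BilinForm.isCompl_orthogonal_iff_disjoint fun x y h => by rwa [hsymm]).mpr ?_
  refine Submodule.disjoint_def.mpr fun x hxI hxJ => ?_
  by_contra hx
  exact (hpos x hx).ne' (hxJ x hxI)

namespace IsMaximalAbelianLieSubalgebra

variable {t : LieSubalgebra ℝ L}

theorem mem_of_forall_lie_eq_zero (ht : IsMaximalAbelianLieSubalgebra t) {x : L}
    (hx : ∀ u ∈ t, ⁅u, x⁆ = 0) : x ∈ t := by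
  have htx : IsLieAbelian (LieSubalgebra.lieSpan ℝ L (insert x t)) := by
    rw [LieSubalgebra.isLieAbelian_lieSpan_iff]
    rintro u (rfl | hu) v (rfl | hv)
    · exact lie_self _
    · rw [← lie_skew, hx v hv, neg_zero]
    · exact hx u hu
    · exact LieSubalgebra.isLieAbelian_iff_forall_lie_eq_zero.mp ht.1 u hu v hv
  rw [← ht.2 _ htx fun u hu => LieSubalgebra.subset_lieSpan (Set.mem_insert_of_mem x hu)]
  exact LieSubalgebra.subset_lieSpan (Set.mem_insert x _)

theorem map {f : L →ₗ⁅ℝ⁆ L'} (hf : Function.Surjective f) {J : LieIdeal ℝ L}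
    (hJ : IsCompl f.ker J) (ht : IsMaximalAbelianLieSubalgebra t) :
    IsMaximalAbelianLieSubalgebra (t.map f) := by
  refine ⟨LieSubalgebra.isLieAbelian_map f ht.1, fun t' ht' hle => le_antisymm ?_ hle⟩
  intro y' hy'
  obtain ⟨y, hyJ, rfl⟩ := f.exists_mem_apply_eq_of_codisjoint hf hJ.codisjoint y'
  refine (LieSubalgebra.mem_map f t _).mpr ⟨y, ht.mem_of_forall_lie_eq_zero fun u hu => ?_, rfl⟩
  exact f.lie_eq_zero_of_map_lie_eq_zero hJ.disjoint hyJ <|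
    LieSubalgebra.isLieAbelian_iff_forall_lie_eq_zero.mp ht' _ (hle ⟨u, hu, rfl⟩) _ hy'

end IsMaximalAbelianLieSubalgebra

end Real

theorem image_of_maximal_abelian_is_maximal_abelian_general
    {g g' : Type*} [LieRing g] [LieAlgebra ℝ g] [FiniteDimensional ℝ g]
    [LieRing g'] [LieAlgebra ℝ g']
    (hg : IsCompactLieAlgebra g)
    (f : g →ₗ⁅ℝ⁆ g') (hf : Function.Surjective f)
    (t : LieSubalgebra ℝ g) (ht : IsMaximalAbelianLieSubalgebra t) :
    IsMaximalAbelianLieSubalgebra (t.map f) := by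
  obtain ⟨J, hJ⟩ := hg.exists_isCompl f.ker
  exact ht.map hf hJ

/-- Let `g` and `g'` be compact Lie algebras (finite-dimensional real Lie
algebras admitting an invariant inner product) and let `f : g → g'` be a surjective Lie
algebra homomorphism.  If `t` is a maximal abelian Lie subalgebra of `g`, then `f(t)` is a
maximal abelian Lie subalgebra of `g'`. -/
theorem image_of_maximal_abelian_is_maximal_abelian
    {g g' : Type*} [LieRing g] [LieAlgebra ℝ g] [FiniteDimensional ℝ g]
    [LieRing g'] [LieAlgebra ℝ g'] [FiniteDimensional ℝ g']
    (hg : IsCompactLieAlgebra g) (hg' : IsCompactLieAlgebra g')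
    (f : g →ₗ⁅ℝ⁆ g') (hf : Function.Surjective f)
    (t : LieSubalgebra ℝ g) (ht : IsMaximalAbelianLieSubalgebra t) :
    IsMaximalAbelianLieSubalgebra (t.map f) :=
  image_of_maximal_abelian_is_maximal_abelian_general hg f hf t ht
end

section
/- Let E be a finite-dimensional real vector space and Λ a subgroup of the additive group of E. If the quotient topological group E/Λ is compact, then Λ contains a basis of E; in particular, Λ contains a subgroup isomorphic to ℤ^(dim E) that is a lattice of full rank in E. -/
open Module

theorem span_top_of_cocompact
    {E : Type*} [NormedAddCommGroup E] [NormedSpace ℝ E] [FiniteDimensional ℝ E]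
    (Λ : AddSubgroup E) (hc : CompactSpace (E ⧸ Λ)) :
    Submodule.span ℝ (Λ : Set E) = ⊤ := by
  by_contra h
  obtain ⟨f, hf0, hker⟩ := (Submodule.span ℝ (Λ : Set E)).exists_le_ker_of_lt_top
    (lt_top_iff_ne_top.2 h)
  -- f kills Λ, descends to a continuous surjection E ⧸ Λ → ℝ
  have hΛker : ∀ x ∈ Λ, f x = 0 := fun x hx =>
    hker (Submodule.subset_span hx)
  let g : E ⧸ Λ → ℝ := QuotientAddGroup.lift Λ f.toAddMonoidHom (by
    intro x hx; exact hΛker x hx)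
  have hgc : Continuous g := by
    apply continuous_quot_lift
    exact (LinearMap.continuous_of_finiteDimensional f)
  have hgsurj : Function.Surjective g := by
    obtain ⟨x, hx⟩ : ∃ x, f x ≠ 0 := by
      by_contra h'
      push_neg at h'
      exact hf0 (LinearMap.ext h')
    intro r
    refine ⟨QuotientAddGroup.mk ((r / f x) • x), ?_⟩
    show f ((r / f x) • x) = r
    rw [map_smul, smul_eq_mul, div_mul_cancel₀ _ hx]
  have : IsCompact (Set.univ : Set ℝ) := by
    rw [← Set.range_eq_univ.2 hgsurj]
    exact isCompact_range hgc
  exact noncompact_univ ℝ this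

/-- Let `E` be a finite-dimensional real vector space and `Λ` a subgroup
of the additive group of `E`.  If the quotient topological group `E ⧸ Λ` is compact, then
`Λ` contains a basis of `E`; in particular, `Λ` contains a subgroup isomorphic to
`ℤ ^ (dim E)` which is a lattice of full rank in `E` (a discrete subgroup spanning `E`). -/
theorem cocompact_subgroup_contains_basis
    {E : Type*} [NormedAddCommGroup E] [NormedSpace ℝ E] [FiniteDimensional ℝ E]
    (Λ : AddSubgroup E) (hc : CompactSpace (E ⧸ Λ)) :
    (∃ b : Basis (Fin (finrank ℝ E)) ℝ E, ∀ i, b i ∈ Λ) ∧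
    ∃ L : AddSubgroup E, L ≤ Λ ∧
      Nonempty (L ≃+ (Fin (finrank ℝ E) → ℤ)) ∧
      DiscreteTopology L ∧
      Submodule.span ℝ (L : Set E) = ⊤ := by
  have hspan := span_top_of_cocompact Λ hc
  obtain ⟨s, hsub, hs, hli⟩ := exists_linearIndependent ℝ (Λ : Set E)
  rw [hspan] at hs
  have hfin : s.Finite := hli.setFinite
  have : Fintype s := hfin.fintype
  let b0 : Basis s ℝ E := Basis.mk hli (by rw [Subtype.range_coe, hs])
  have hcard : Fintype.card s = finrank ℝ E := (finrank_eq_card_basis b0).symm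
  let e : s ≃ Fin (finrank ℝ E) := Fintype.equivFinOfCardEq hcard
  let b : Basis (Fin (finrank ℝ E)) ℝ E := b0.reindex e
  have hbmem : ∀ i, b i ∈ Λ := by
    intro i
    have : b i = b0 (e.symm i) := b0.reindex_apply e i
    rw [this, Basis.mk_apply]
    exact hsub (e.symm i).2
  refine ⟨⟨b, hbmem⟩, ?_⟩
  let p : Submodule ℤ E := Submodule.span ℤ (Set.range b)
  refine ⟨p.toAddSubgroup, ?_, ?_, ?_, ?_⟩
  · rw [← AddSubgroup.toIntSubmodule_toAddSubgroup Λ]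
    exact (Submodule.toAddSubgroup_le _ _).2 (Submodule.span_le.2 (by
      rintro _ ⟨i, rfl⟩; exact hbmem i))
  · exact ⟨((b.restrictScalars ℤ).equivFun.toAddEquiv : p ≃+ (Fin (finrank ℝ E) → ℤ))⟩
  · exact (inferInstance : DiscreteTopology p)
  · rw [← top_le_iff, ← b.span_eq]
    exact Submodule.span_le.2 (fun x hx => Submodule.subset_span (Submodule.subset_span hx))
end
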